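/- In a multi-player perfect-information game with probabilistic transitions, countable state space, nonempty finite action sets, and bounded continuous payoff functions, the values v_i(s) of the zero-sum subgames G_i(s) exist and satisfy, for every state s ∈ S: v_{i(s)}(s) = max_{a∈A(s)} v_{i(s)}(s,a), and for every player j ∈ N∖{i(s)}: v_j(s) = min_{a∈A(s)} v_j(s,a), where v_i(s,a) = ∑_{z∈S(s,a)} q(s,a)(z)·v_i(z). -/

import Mathlib

open MeasureTheory

/-- A multi-player perfect-information game with probabilistic transitions:
a set of players `N`, a state space `S` with initial state `init`, a controlling
player `ctrl s` and a nonempty finite action set `act s` for every state `s`, and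
a transition probability measure `q s a` for every state `s` and action `a`.
The supports of the transition measures are mutually disjoint and every state is
reachable from the initial state, so every state is reached from `init` via
exactly one finite history (states correspond bijectively to histories). -/
structure PGame (N S A : Type*) where
  init : S
  ctrl : S → N
  act : S → Finset A
  act_nonempty : ∀ s, (act s).Nonempty
  q : S → A → PMF S
  unique_pred : ∀ z s a s' a', a ∈ act s → a' ∈ act s' →
    z ∈ (q s a).support → z ∈ (q s' a').support → s = s' ∧ a = a'
  init_not_succ : ∀ s a, a ∈ act s → init ∉ (q s a).support
  reach : ∀ z, Relation.ReflTransGen (fun s t => ∃ a ∈ act s, t ∈ (q s a).support) init z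

namespace PGame

variable {N S A : Type*} (G : PGame N S A)

/-- A play: an infinite alternating sequence of states and actions, starting at the
initial state, choosing legal actions and moving to successor states. -/
def IsPlay (p : ℕ → S × A) : Prop :=
  (p 0).1 = G.init ∧
    ∀ m, (p m).2 ∈ G.act (p m).1 ∧ (p (m + 1)).1 ∈ (G.q (p m).1 (p m).2).support

/-- The set of plays of the game. -/
def Play : Type _ := { p : ℕ → S × A // G.IsPlay p }

/-- The set of plays carries the topology generated by the cylinder sets, i.e. the
topology induced by the product of the discrete topologies. -/
instance : TopologicalSpace G.Play :=
  letI : TopologicalSpace S := ⊥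
  letI : TopologicalSpace A := ⊥
  inferInstanceAs (TopologicalSpace { p : ℕ → S × A // G.IsPlay p })

/-- The Borel σ-algebra on plays. -/
instance : MeasurableSpace G.Play := borel G.Play

/-- A strategy of player `i`: a choice of a legal action in every state controlled
by `i`. -/
def Strat (i : N) : Type _ := { f : S → A // ∀ s, G.ctrl s = i → f s ∈ G.act s }

/-- A strategy profile. -/
def Profile : Type _ := ∀ i : N, G.Strat i

/-- The profile `σ` with player `i`'s strategy replaced by `τi`. -/
noncomputable def comb (i : N) (τi : G.Strat i) (σ : G.Profile) : G.Profile :=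
  haveI := Classical.decEq N
  Function.update σ i τi

/-- The action that profile `σ` plays in state `s`. -/
def playFun (σ : G.Profile) (s : S) : A := (σ (G.ctrl s)).1 s

/-- The cylinder set of plays agreeing with the play `p0` on the first `n`
coordinates. -/
def cylSet (p0 : G.Play) (n : ℕ) : Set G.Play := { p : G.Play | ∀ m < n, p.1 m = p0.1 m }

open Classical in
/-- `μ` is the family of Borel probability measures on plays induced by the strategy
profiles via the Ionescu–Tulcea construction applied to `q`; it is uniquely
characterized by the probabilities it assigns to the cylinder sets: actions are
chosen deterministically according to the profile and states are drawn from the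
transition probabilities. -/
def IsInducedMeasure (μ : G.Profile → Measure G.Play) : Prop :=
  (∀ σ, IsProbabilityMeasure (μ σ)) ∧
    ∀ (σ : G.Profile) (p0 : G.Play) (n : ℕ),
      μ σ (G.cylSet p0 n) =
        ∏ m ∈ Finset.range n,
          ((if (p0.1 m).2 = G.playFun σ (p0.1 m).1 then 1 else 0) *
            (if m + 1 < n then G.q (p0.1 m).1 (p0.1 m).2 ((p0.1 (m + 1)).1) else 1))

/-- Expected payoff of player `i` under the profile `σ`: the integral of `u i`
against the induced measure. -/
noncomputable def epay (μ : G.Profile → Measure G.Play) (u : N → G.Play → ℝ)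
    (σ : G.Profile) (i : N) : ℝ :=
  ∫ p, u i p ∂(μ σ)

/-- Nash equilibrium: no player can improve his expected payoff by a unilateral
deviation. -/
def IsNash (μ : G.Profile → Measure G.Play) (u : N → G.Play → ℝ) (σ : G.Profile) : Prop :=
  ∀ (i : N) (τi : G.Strat i), G.epay μ u (G.comb i τi σ) i ≤ G.epay μ u σ i

/-- Secure equilibrium: a Nash equilibrium such that no player `i` has a deviation
keeping his own expected payoff equal, making all opponents weakly worse off, and
making some opponent strictly worse off. -/
def IsSecure (μ : G.Profile → Measure G.Play) (u : N → G.Play → ℝ) (σ : G.Profile) : Prop :=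
  G.IsNash μ u σ ∧
    ¬ ∃ (i : N) (τi : G.Strat i),
        G.epay μ u (G.comb i τi σ) i = G.epay μ u σ i ∧
        (∀ j : N, j ≠ i → G.epay μ u (G.comb i τi σ) j ≤ G.epay μ u σ j) ∧
        (∃ k : N, k ≠ i ∧ G.epay μ u (G.comb i τi σ) k < G.epay μ u σ k)

/-- One-step successor relation between states. -/
def step (s t : S) : Prop := ∃ a ∈ G.act s, t ∈ (G.q s a).support

/-- The set of plays that pass through the state `s` (i.e. the plays extending the
unique history from the initial state to `s`). -/
def through (s : S) : Set G.Play := { p : G.Play | ∃ n, (p.1 n).1 = s }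

/-- `E` is the family of subgame expected payoffs: `E σ s i` is the expected payoff
`u_i(σ|s)` of player `i` in the subgame `G(s)` starting from state `s`, under the
profile `σ`.  It is characterized as follows: `E σ s i` only depends on the actions
of `σ` in the subtree rooted at `s`, and for any profile `τ` agreeing with `σ`
there, the integral of `u_i` over the set of plays through `s` under the measure
induced by `τ` equals `E σ s i` times the probability of reaching `s` under `τ`. -/
def IsSubgamePayoff (μ : G.Profile → Measure G.Play) (u : N → G.Play → ℝ)
    (E : G.Profile → S → N → ℝ) : Prop :=
  ∀ (σ τ : G.Profile) (s : S) (i : N),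
    (∀ z, Relation.ReflTransGen G.step s z → G.playFun τ z = G.playFun σ z) →
    ∫ p in G.through s, u i p ∂(μ τ) = E σ s i * (μ τ (G.through s)).toReal
/-- The value `v_i(s)` of the zero-sum subgame `G_i(s)`, in which player `i`
maximizes the expectation of `u_i` and the coalition of his opponents jointly
minimizes it (defined as the `sup inf`; the theorem asserts that it coincides
with the `inf sup`). -/
noncomputable def val (E : G.Profile → S → N → ℝ) (s : S) (i : N) : ℝ :=
  ⨆ τi : G.Strat i, ⨅ τo : G.Profile, E (G.comb i τi τo) s i

/-- `v_i(s,a) = ∑_{z ∈ S(s,a)} q(s,a)(z) · v_i(z)`: the expected value for player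
`i` if action `a` is chosen in state `s`. -/
noncomputable def valQ (E : G.Profile → S → N → ℝ) (s : S) (a : A) (i : N) : ℝ :=
  ∑' z : S, ((G.q s a) z).toReal * G.val E z i

end PGame

/-!
The inf-sup value `upperVal` always dominates the sup-inf value `val`. Subgame payoffs obey the
one-step recursion `E σ s = ∑ q(s, σ s)(z) E σ z` and depend only on `σ` inside the subgame, so
play in the subgames of the successors of `s` can be chosen ε-optimally and independently; this
gives the one-step equations for `upperVal` (max at the states of `i`, min elsewhere).
Conversely, let `i` play greedily with respect to `upperVal`. Against any opponents, `upperVal`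
of the current state is then a submartingale, and it never exceeds the supremum of `u i` over
the plays through that state. By continuity this supremum tends to `u i` along every play, so
dominated convergence gives `upperVal ≤ E (greedy, τo)`, hence `upperVal ≤ val`.
-/

section AbsBounds

variable {ι : Sort*} {f : ι → ℝ} {C : ℝ}

theorem bddAbove_range_of_abs_le (h : ∀ x, |f x| ≤ C) : BddAbove (Set.range f) :=
  ⟨C, Set.forall_mem_range.2 fun x => (abs_le.1 (h x)).2⟩

theorem bddBelow_range_of_abs_le (h : ∀ x, |f x| ≤ C) : BddBelow (Set.range f) :=
  ⟨-C, Set.forall_mem_range.2 fun x => (abs_le.1 (h x)).1⟩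

theorem abs_ciSup_le [Nonempty ι] (h : ∀ x, |f x| ≤ C) : |⨆ x, f x| ≤ C :=
  abs_le.2 ⟨(abs_le.1 (h (Classical.arbitrary ι))).1.trans
    (le_ciSup (bddAbove_range_of_abs_le h) _), ciSup_le fun x => (abs_le.1 (h x)).2⟩

theorem abs_ciInf_le [Nonempty ι] (h : ∀ x, |f x| ≤ C) : |⨅ x, f x| ≤ C :=
  abs_le.2 ⟨le_ciInf fun x => (abs_le.1 (h x)).1,
    (ciInf_le (bddBelow_range_of_abs_le h) _).trans (abs_le.1 (h (Classical.arbitrary ι))).2⟩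

end AbsBounds

namespace PMF

variable {α : Type*} (p : PMF α) {f g : α → ℝ} {C C' : ℝ}

theorem summable_toReal : Summable fun a => (p a).toReal :=
  ENNReal.summable_toReal (p.tsum_coe ▸ ENNReal.one_ne_top)

theorem tsum_toReal : ∑' a, (p a).toReal = 1 := by
  rw [← ENNReal.tsum_toReal_eq p.apply_ne_top, p.tsum_coe, ENNReal.toReal_one]

theorem summable_toReal_mul (hf : ∀ a, |f a| ≤ C) : Summable fun a => (p a).toReal * f a :=
  (p.summable_toReal.mul_right C).of_norm_bounded fun a => by
    rw [norm_mul, Real.norm_of_nonneg ENNReal.toReal_nonneg, Real.norm_eq_abs]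
    exact mul_le_mul_of_nonneg_left (hf a) ENNReal.toReal_nonneg

theorem tsum_toReal_mul_le_tsum_toReal_mul (hf : ∀ a, |f a| ≤ C) (hg : ∀ a, |g a| ≤ C')
    (h : ∀ a ∈ p.support, f a ≤ g a) :
    ∑' a, (p a).toReal * f a ≤ ∑' a, (p a).toReal * g a := by
  refine (p.summable_toReal_mul hf).tsum_le_tsum (fun a => ?_) (p.summable_toReal_mul hg)
  by_cases ha : a ∈ p.support
  · exact mul_le_mul_of_nonneg_left (h a ha) ENNReal.toReal_nonneg
  · simp [(p.apply_eq_zero_iff a).mpr ha]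

theorem tsum_toReal_mul_add_const (hf : ∀ a, |f a| ≤ C) (c : ℝ) :
    ∑' a, (p a).toReal * (f a + c) = ∑' a, (p a).toReal * f a + c := by
  simp_rw [mul_add]
  rw [(p.summable_toReal_mul hf).tsum_add (p.summable_toReal.mul_right c), tsum_mul_right,
    p.tsum_toReal, one_mul]

theorem tsum_toReal_mul_le_tsum_toReal_mul_add (hf : ∀ a, |f a| ≤ C) (hg : ∀ a, |g a| ≤ C')
    {c : ℝ} (h : ∀ a ∈ p.support, f a ≤ g a + c) :
    ∑' a, (p a).toReal * f a ≤ ∑' a, (p a).toReal * g a + c := by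
  rw [← p.tsum_toReal_mul_add_const hg]
  exact p.tsum_toReal_mul_le_tsum_toReal_mul hf
    (fun a => (abs_add_le _ _).trans (add_le_add_left (hg a) _)) h

theorem hasSum_support_toReal_mul (hf : ∀ a, |f a| ≤ C) :
    HasSum (fun a : p.support => (p a).toReal * f a) (∑' a, (p a).toReal * f a) := by
  refine (hasSum_subtype_iff_of_support_subset fun a ha => ?_).mpr
    (p.summable_toReal_mul hf).hasSum
  exact (p.mem_support_iff a).mpr fun h0 => ha (by simp [h0])

end PMF

theorem Finset.prod_range_succ_mul_ite_lt {M : Type*} [CommMonoid M] (f g : ℕ → M)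
    (n : ℕ) :
    ∏ m ∈ Finset.range (n + 1), (f m * if m + 1 < n + 1 then g m else 1) =
      (∏ m ∈ Finset.range (n + 1), f m) * ∏ m ∈ Finset.range n, g m := by
  have h : ∀ m ∈ Finset.range n, (f m * if m + 1 < n + 1 then g m else 1) = f m * g m :=
    fun m hm => by rw [if_pos (by simpa using hm)]
  rw [Finset.prod_range_succ, if_neg (lt_irrefl _), mul_one, Finset.prod_congr rfl h,
    Finset.prod_mul_distrib, Finset.prod_range_succ f n, mul_right_comm]

namespace PGame

open MeasureTheory Filter Topology Relation

variable {N S A : Type*} {G : PGame N S A}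

theorem playFun_mem (σ : G.Profile) (s : S) : G.playFun σ s ∈ G.act s :=
  (σ (G.ctrl s)).2 s rfl

section Tree

noncomputable def run (G : PGame N S A) (s : S) : ℕ → S × A
  | 0 => (s, (G.act_nonempty s).choose)
  | k + 1 =>
    let z := (G.q (G.run s k).1 (G.run s k).2).support_nonempty.choose
    (z, (G.act_nonempty z).choose)

theorem run_zero (s : S) : (G.run s 0).1 = s := rfl

theorem run_step (s : S) (k : ℕ) :
    (G.run s k).2 ∈ G.act (G.run s k).1 ∧
      (G.run s (k + 1)).1 ∈ (G.q (G.run s k).1 (G.run s k).2).support := by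
  refine ⟨?_, (G.q _ _).support_nonempty.choose_spec⟩
  cases k <;> exact (G.act_nonempty _).choose_spec

instance : Nonempty G.Play := ⟨⟨G.run G.init, rfl, G.run_step G.init⟩⟩

theorem exists_play_splice (p : G.Play) (n : ℕ) {b : A} (hb : b ∈ G.act (p.1 n).1)
    {z : S} (hz : z ∈ (G.q (p.1 n).1 b).support) :
    ∃ p' : G.Play, (∀ m < n, p'.1 m = p.1 m) ∧ p'.1 n = ((p.1 n).1, b) ∧
      (p'.1 (n + 1)).1 = z := by
  classical
  let f : ℕ → S × A := fun m =>
    if m < n then p.1 m else if m = n then ((p.1 n).1, b) else G.run z (m - (n + 1))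
  have hf : G.IsPlay f := by
    refine ⟨?_, fun m => ?_⟩
    · rcases n.eq_zero_or_pos with rfl | hn
      · simpa [f] using p.2.1
      · simpa [f, hn] using p.2.1
    rcases lt_trichotomy (m + 1) n with hm | hm | hm
    · simpa [f, hm, (Nat.lt_succ_self m).trans hm] using p.2.2 m
    · subst hm
      simpa [f] using p.2.2 m
    · rcases (Nat.lt_succ_iff.mp hm).eq_or_lt with rfl | hm'
      · simpa [f] using ⟨hb, hz⟩
      · have e : m + 1 - (n + 1) = m - (n + 1) + 1 := by omega
        simpa [f, hm'.not_gt, hm'.ne', (hm'.trans (Nat.lt_succ_self m)).not_gt,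
          (hm'.trans (Nat.lt_succ_self m)).ne', e] using G.run_step z (m - (n + 1))
  exact ⟨⟨f, hf⟩, fun m hm => by simp [f, hm], by simp [f], by simp [f, run_zero]⟩

theorem exists_play_visit (s : S) : ∃ (p : G.Play) (n : ℕ), (p.1 n).1 = s := by
  induction G.reach s with
  | refl => exact ⟨Classical.arbitrary _, 0, (Classical.arbitrary G.Play).2.1⟩
  | tail _ hstep ih =>
    obtain ⟨p, n, rfl⟩ := ih
    obtain ⟨a, ha, hz⟩ := hstep
    obtain ⟨p', -, -, hp'⟩ := exists_play_splice p n ha hz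
    exact ⟨p', n + 1, hp'⟩

theorem exists_play_apply_eq {s : S} {b : A} (hb : b ∈ G.act s) :
    ∃ (p : G.Play) (n : ℕ), p.1 n = (s, b) := by
  obtain ⟨p, n, rfl⟩ := G.exists_play_visit s
  obtain ⟨p', -, hp', -⟩ := exists_play_splice p n hb (G.q _ b).support_nonempty.choose_spec
  exact ⟨p', n, hp'⟩

theorem play_apply_eq_of_state_eq {p p' : G.Play} {n : ℕ} (h : (p.1 n).1 = (p'.1 n).1) :
    ∀ m < n, p.1 m = p'.1 m := by
  induction n with
  | zero => intro m hm; omega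
  | succ n ih =>
    have hpred := G.unique_pred _ _ _ _ _ (p.2.2 n).1 (p'.2.2 n).1 (h ▸ (p.2.2 n).2)
      (p'.2.2 n).2
    have hn : p.1 n = p'.1 n := Prod.ext hpred.1 hpred.2
    intro m hm
    rcases (Nat.lt_succ_iff.mp hm).lt_or_eq with hm | rfl
    · exact ih (congrArg Prod.fst hn) m hm
    · exact hn

theorem time_eq_of_state_eq {p p' : G.Play} :
    ∀ {n m : ℕ}, (p.1 n).1 = (p'.1 m).1 → n = m
  | 0, 0, _ => rfl
  | 0, m + 1, h => by
    have := (p'.2.2 m).2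
    rw [← h, p.2.1] at this
    exact absurd this (G.init_not_succ _ _ (p'.2.2 m).1)
  | n + 1, 0, h => by
    have := (p.2.2 n).2
    rw [h, p'.2.1] at this
    exact absurd this (G.init_not_succ _ _ (p.2.2 n).1)
  | n + 1, m + 1, h => by
    rw [time_eq_of_state_eq (G.unique_pred _ _ _ _ _ (p.2.2 n).1 (p'.2.2 m).1 (p.2.2 n).2
      (h ▸ (p'.2.2 m).2)).1]

theorem act_mem_of_state_eq {p : G.Play} {n : ℕ} {s : S} (h : (p.1 n).1 = s) :
    (p.1 n).2 ∈ G.act s :=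
  h ▸ (p.2.2 n).1

noncomputable def historyPlay (G : PGame N S A) (s : S) : G.Play :=
  (G.exists_play_visit s).choose

noncomputable def depth (G : PGame N S A) (s : S) : ℕ :=
  (G.exists_play_visit s).choose_spec.choose

theorem historyPlay_depth (s : S) : ((G.historyPlay s).1 (G.depth s)).1 = s :=
  (G.exists_play_visit s).choose_spec.choose_spec

theorem eq_depth_of_state_eq {p : G.Play} {n : ℕ} {s : S} (h : (p.1 n).1 = s) :
    n = G.depth s :=
  time_eq_of_state_eq (h.trans (historyPlay_depth s).symm)

theorem mem_through_iff {p : G.Play} {s : S} : p ∈ G.through s ↔ (p.1 (G.depth s)).1 = s :=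
  ⟨fun ⟨_, hn⟩ => eq_depth_of_state_eq hn ▸ hn, fun h => ⟨_, h⟩⟩

instance (s : S) : Nonempty (G.through s) :=
  let ⟨p, n, hp⟩ := G.exists_play_visit s
  ⟨⟨p, n, hp⟩⟩

theorem depth_of_step {s z : S} (h : G.step s z) : G.depth z = G.depth s + 1 := by
  obtain ⟨a, ha, hz⟩ := h
  obtain ⟨p, n, rfl⟩ := G.exists_play_visit s
  obtain ⟨p', -, hp', hz'⟩ := exists_play_splice p n ha hz
  rw [← eq_depth_of_state_eq hz', ← eq_depth_of_state_eq (congrArg Prod.fst hp')]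

theorem depth_le_of_reach {s z : S} (h : ReflTransGen G.step s z) : G.depth s ≤ G.depth z := by
  induction h with
  | refl => rfl
  | tail _ hstep ih => rw [depth_of_step hstep]; omega

theorem ne_of_step_of_reach {s z x : S} (hz : G.step s z) (hx : ReflTransGen G.step z x) :
    x ≠ s := by
  rintro rfl
  have := depth_le_of_reach hx
  rw [depth_of_step hz] at this
  omega

theorem through_subset_of_reach {s z : S} (h : ReflTransGen G.step s z) :
    G.through z ⊆ G.through s := by
  induction h with
  | refl => rfl
  | @tail y z _ hstep ih =>
    refine fun p hp => ih (mem_through_iff.mpr ?_)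
    obtain ⟨a, ha, hz⟩ := hstep
    rw [mem_through_iff, depth_of_step ⟨a, ha, hz⟩] at hp
    exact (G.unique_pred _ _ _ _ _ (p.2.2 _).1 ha (hp ▸ (p.2.2 _).2) hz).1

theorem child_eq_of_reach {s z z' x : S} (hz : G.step s z) (hz' : G.step s z')
    (hx : ReflTransGen G.step z x) (hx' : ReflTransGen G.step z' x) : z = z' := by
  obtain ⟨p, hp⟩ := (inferInstance : Nonempty (G.through x))
  have h := mem_through_iff.mp (through_subset_of_reach hx hp)
  rw [depth_of_step hz, ← depth_of_step hz'] at h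
  exact h.symm.trans (mem_through_iff.mp (through_subset_of_reach hx' hp))

theorem through_subset_cylSet (p : G.Play) (k : ℕ) : G.through (p.1 k).1 ⊆ G.cylSet p k := by
  intro p' hp'
  rw [mem_through_iff, ← eq_depth_of_state_eq rfl] at hp'
  exact play_apply_eq_of_state_eq hp'

end Tree

section Topology

instance : BorelSpace G.Play := ⟨rfl⟩

theorem isOpen_setOf_apply_mem (k : ℕ) (T : Set (S × A)) :
    IsOpen {p : G.Play | p.1 k ∈ T} := by
  -- the topologies from which the topology of plays is induced
  let _ : TopologicalSpace S := ⊥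
  let _ : TopologicalSpace A := ⊥
  have _ : DiscreteTopology S := ⟨rfl⟩
  have _ : DiscreteTopology A := ⟨rfl⟩
  have : IsOpen ((fun f : ℕ → S × A => f k) ⁻¹' T) :=
    (isOpen_discrete T).preimage (continuous_apply k)
  exact this.preimage continuous_subtype_val

theorem measurable_comp_apply {β : Type*} [MeasurableSpace β] (k : ℕ) (f : S × A → β) :
    Measurable fun p : G.Play => f (p.1 k) :=
  fun B _ => (isOpen_setOf_apply_mem k (f ⁻¹' B)).measurableSet

theorem measurableSet_setOf_apply_eq (k : ℕ) (c : S × A) :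
    MeasurableSet {p : G.Play | p.1 k = c} :=
  (isOpen_setOf_apply_mem k {c}).measurableSet

theorem measurableSet_through (s : S) : MeasurableSet (G.through s) := by
  have : G.through s = {p : G.Play | p.1 (G.depth s) ∈ Prod.fst ⁻¹' {s}} :=
    Set.ext fun _ => mem_through_iff
  rw [this]
  exact (isOpen_setOf_apply_mem _ _).measurableSet

theorem exists_cylSet_subset_of_mem_nhds {p : G.Play} {V : Set G.Play} (hV : V ∈ 𝓝 p) :
    ∃ M, G.cylSet p M ⊆ V := by
  let _ : TopologicalSpace S := ⊥
  let _ : TopologicalSpace A := ⊥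
  have _ : DiscreteTopology S := ⟨rfl⟩
  have _ : DiscreteTopology A := ⟨rfl⟩
  rw [show 𝓝 p = comap Subtype.val (𝓝 p.1) from nhds_induced _ _] at hV
  obtain ⟨W, hW, hWV⟩ := mem_comap.mp hV
  rw [nhds_pi, mem_pi] at hW
  obtain ⟨I, hI, t, ht, hIt⟩ := hW
  obtain ⟨M, hM⟩ := hI.bddAbove
  refine ⟨M + 1, fun p' hp' => hWV (hIt fun k hk => ?_)⟩
  rw [hp' k (Nat.lt_succ_of_le (hM hk))]
  exact mem_of_mem_nhds (ht k)

end Topology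

section Measure

variable {μ : G.Profile → Measure G.Play} (hμ : G.IsInducedMeasure μ)

theorem setOf_apply_depth_eq_cylSet {s : S} {b : A} {p0 : G.Play}
    (h : p0.1 (G.depth s) = (s, b)) :
    {p : G.Play | p.1 (G.depth s) = (s, b)} = G.cylSet p0 (G.depth s + 1) := by
  ext p
  refine ⟨fun hp m hm => ?_, fun hp => (hp _ (Nat.lt_succ_self _)).trans h⟩
  rcases (Nat.lt_succ_iff.mp hm).lt_or_eq with hm | rfl
  · exact play_apply_eq_of_state_eq (congrArg Prod.fst (hp.trans h.symm)) m hm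
  · exact hp.trans h.symm

include hμ

open Classical in
theorem measure_cylSet_succ (σ : G.Profile) (p0 : G.Play) (n : ℕ) :
    μ σ (G.cylSet p0 (n + 1)) =
      (∏ m ∈ Finset.range (n + 1), if (p0.1 m).2 = G.playFun σ (p0.1 m).1 then 1 else 0) *
        ∏ m ∈ Finset.range n, G.q (p0.1 m).1 (p0.1 m).2 (p0.1 (m + 1)).1 := by
  rw [hμ.2, Finset.prod_range_succ_mul_ite_lt]

theorem measure_setOf_apply_depth_eq_of_ne {s : S} {b : A} (hb : b ∈ G.act s)
    (σ : G.Profile) (hne : b ≠ G.playFun σ s) :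
    μ σ {p : G.Play | p.1 (G.depth s) = (s, b)} = 0 := by
  classical
  obtain ⟨p0, n, hp0⟩ := G.exists_play_apply_eq hb
  obtain rfl := eq_depth_of_state_eq (congrArg Prod.fst hp0)
  rw [setOf_apply_depth_eq_cylSet hp0, measure_cylSet_succ hμ,
    Finset.prod_eq_zero (Finset.self_mem_range_succ _) (by simp [hp0, hne]), zero_mul]

theorem measure_through (σ : G.Profile) (s : S) :
    μ σ (G.through s) = μ σ {p : G.Play | p.1 (G.depth s) = (s, G.playFun σ s)} := by
  classical
  have hunion : G.through s = ⋃ b ∈ G.act s, {p : G.Play | p.1 (G.depth s) = (s, b)} := by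
    ext p
    simp only [mem_through_iff, Set.mem_iUnion, Set.mem_ofPred_eq]
    exact ⟨fun h => ⟨_, act_mem_of_state_eq h, Prod.ext h rfl⟩, fun ⟨b, _, hb⟩ => by rw [hb]⟩
  have hdisj : (G.act s : Set A).PairwiseDisjoint
      fun b => {p : G.Play | p.1 (G.depth s) = (s, b)} :=
    fun b _ b' _ hne => Set.disjoint_left.mpr fun p hp hp' =>
      hne (congrArg Prod.snd (hp.symm.trans hp'))
  rw [hunion, measure_biUnion_finset hdisj fun b _ => measurableSet_setOf_apply_eq _ _,
    Finset.sum_eq_single_of_mem _ (playFun_mem σ s)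
      fun b hb hne => measure_setOf_apply_depth_eq_of_ne hμ hb σ hne]

theorem measure_through_child (σ : G.Profile) {s z : S}
    (hz : z ∈ (G.q s (G.playFun σ s)).support) :
    μ σ (G.through z) = μ σ (G.through s) * G.q s (G.playFun σ s) z := by
  classical
  have hdz : G.depth z = G.depth s + 1 := depth_of_step ⟨_, playFun_mem σ s, hz⟩
  obtain ⟨p, n, hp⟩ := G.exists_play_apply_eq (playFun_mem σ z)
  obtain rfl : n = G.depth s + 1 := (eq_depth_of_state_eq (congrArg Prod.fst hp)).trans hdz
  have hpred := G.unique_pred z _ _ _ _ (p.2.2 (G.depth s)).1 (playFun_mem σ s)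
    (by have := (p.2.2 (G.depth s)).2; rwa [hp] at this) hz
  have hps : p.1 (G.depth s) = (s, G.playFun σ s) := Prod.ext hpred.1 hpred.2
  rw [measure_through hμ σ z, measure_through hμ σ s,
    setOf_apply_depth_eq_cylSet (hdz ▸ hp), setOf_apply_depth_eq_cylSet hps, hdz,
    measure_cylSet_succ hμ, measure_cylSet_succ hμ]
  simp only [Finset.prod_range_succ _ (G.depth s + 1), Finset.prod_range_succ _ (G.depth s),
    hp, hps, if_true]
  ring

theorem measure_through_ne_zero {σ : G.Profile} {s : S}
    (h : ∀ m < G.depth s, G.playFun σ ((G.historyPlay s).1 m).1 = ((G.historyPlay s).1 m).2) :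
    μ σ (G.through s) ≠ 0 := by
  classical
  obtain ⟨p, n, hp⟩ := G.exists_play_apply_eq (playFun_mem σ s)
  obtain rfl := eq_depth_of_state_eq (congrArg Prod.fst hp)
  have hhist := play_apply_eq_of_state_eq
    ((congrArg Prod.fst hp).trans (historyPlay_depth s).symm)
  rw [measure_through hμ, setOf_apply_depth_eq_cylSet hp, measure_cylSet_succ hμ]
  refine mul_ne_zero (Finset.prod_ne_zero_iff.mpr fun m hm => ?_)
    (Finset.prod_ne_zero_iff.mpr fun m _ => (PMF.mem_support_iff _ _).mp (p.2.2 m).2)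
  rcases (Nat.lt_succ_iff.mp (Finset.mem_range.mp hm)).lt_or_eq with hm | rfl
  · rw [hhist m hm, h m hm, if_pos rfl]
    exact one_ne_zero
  · rw [hp, if_pos rfl]
    exact one_ne_zero

end Measure

section Profiles

instance (i : N) : Nonempty (G.Strat i) :=
  ⟨⟨fun s => (G.act_nonempty s).choose, fun s _ => (G.act_nonempty s).choose_spec⟩⟩

instance : Nonempty G.Profile := ⟨fun _ => Classical.arbitrary _⟩

theorem comb_apply_self {i : N} (τi : G.Strat i) (τo : G.Profile) : G.comb i τi τo i = τi :=
  @Function.update_self N G.Strat (Classical.decEq N) _ τi τo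

theorem playFun_comb_of_ctrl_eq {i : N} (τi : G.Strat i) (τo : G.Profile) {s : S}
    (h : G.ctrl s = i) : G.playFun (G.comb i τi τo) s = τi.1 s := by
  subst h
  exact congrArg (fun t : G.Strat _ => t.1 s) (comb_apply_self τi τo)

theorem playFun_comb_of_ctrl_ne {i : N} (τi : G.Strat i) (τo : G.Profile) {s : S}
    (h : G.ctrl s ≠ i) : G.playFun (G.comb i τi τo) s = G.playFun τo s :=
  congrArg (fun t : G.Strat _ => t.1 s)
    (@Function.update_of_ne N G.Strat (Classical.decEq N) _ _ h τi τo)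

open Classical in
/-- Agrees with `σ` in the subgame of `s` but reaches `s` with positive probability, so that
`IsSubgamePayoff` pins down `E σ s`. -/
noncomputable def followHistory (G : PGame N S A) (σ : G.Profile) (s : S) : G.Profile :=
  fun j => ⟨fun x => if G.depth x < G.depth s ∧ ((G.historyPlay s).1 (G.depth x)).1 = x
      then ((G.historyPlay s).1 (G.depth x)).2 else (σ j).1 x, fun x hx => by
    dsimp only
    split_ifs with h
    · exact act_mem_of_state_eq h.2
    · exact (σ j).2 x hx⟩

theorem playFun_followHistory_of_reach (σ : G.Profile) {s z : S}
    (h : ReflTransGen G.step s z) : G.playFun (G.followHistory σ s) z = G.playFun σ z := by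
  simp only [playFun, followHistory]
  rw [if_neg fun h' => (depth_le_of_reach h).not_gt h'.1]

theorem playFun_followHistory_historyPlay (σ : G.Profile) (s : S) {m : ℕ}
    (hm : m < G.depth s) :
    G.playFun (G.followHistory σ s) ((G.historyPlay s).1 m).1 = ((G.historyPlay s).1 m).2 := by
  have hd : G.depth ((G.historyPlay s).1 m).1 = m := (eq_depth_of_state_eq rfl).symm
  simp only [playFun, followHistory, hd, and_true, if_pos hm]

open Classical in
noncomputable def graft (G : PGame N S A) (s : S) (a : A) (ha : a ∈ G.act s)
    (F : S → G.Profile) : G.Profile :=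
  fun j => ⟨fun x => if x = s then a
    else if h : ∃ z, G.step s z ∧ ReflTransGen G.step z x then (F h.choose j).1 x
    else (Classical.arbitrary (G.Strat j)).1 x, fun x hx => by
    dsimp only
    split_ifs with h₁ h₂
    · exact h₁ ▸ ha
    · exact (F _ j).2 x hx
    · exact (Classical.arbitrary (G.Strat j)).2 x hx⟩

theorem graft_apply_self {s : S} {a : A} (ha : a ∈ G.act s) (F : S → G.Profile) (j : N) :
    (G.graft s a ha F j).1 s = a := by
  simp [graft]

theorem graft_apply_of_reach {s z x : S} {a : A} (ha : a ∈ G.act s) (F : S → G.Profile)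
    (hz : G.step s z) (hx : ReflTransGen G.step z x) (j : N) :
    (G.graft s a ha F j).1 x = (F z j).1 x := by
  have h : ∃ z, G.step s z ∧ ReflTransGen G.step z x := ⟨z, hz, hx⟩
  simp only [graft, if_neg (ne_of_step_of_reach hz hx), dif_pos h,
    child_eq_of_reach h.choose_spec.1 hz h.choose_spec.2 hx]

end Profiles

section SubgamePayoff

variable {μ : G.Profile → Measure G.Play} {u : N → G.Play → ℝ} {E : G.Profile → S → N → ℝ}
  (hμ : G.IsInducedMeasure μ) (hE : G.IsSubgamePayoff μ u E) {i : N}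

include hμ

theorem integrable_of_abs_le {g : G.Play → ℝ} (hg : Measurable g) {C : ℝ}
    (hb : ∀ p, |g p| ≤ C) (σ : G.Profile) : Integrable g (μ σ) :=
  have := hμ.1 σ
  .of_bound hg.aestronglyMeasurable C
    (ae_of_all _ fun p => (Real.norm_eq_abs _).trans_le (hb p))

theorem toReal_measure_through_followHistory_pos (σ : G.Profile) (s : S) :
    0 < (μ (G.followHistory σ s) (G.through s)).toReal := by
  have := hμ.1 (G.followHistory σ s)
  exact ENNReal.toReal_pos
    (measure_through_ne_zero hμ fun _ hm => playFun_followHistory_historyPlay σ s hm)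
    (measure_ne_top _ _)

theorem through_ae_eq_iUnion_through (σ : G.Profile) (s : S) :
    G.through s =ᵐ[μ σ] ⋃ z : (G.q s (G.playFun σ s)).support, G.through z := by
  classical
  set a := G.playFun σ s
  have hsub : (⋃ z : (G.q s a).support, G.through z) ⊆ G.through s :=
    Set.iUnion_subset fun z => through_subset_of_reach (.single ⟨a, playFun_mem σ s, z.2⟩)
  have hdiff : G.through s \ ⋃ z : (G.q s a).support, G.through z ⊆
      ⋃ b ∈ (G.act s).erase a, {p : G.Play | p.1 (G.depth s) = (s, b)} := by
    rintro p ⟨hp, hnot⟩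
    rw [mem_through_iff] at hp
    have hact : (p.1 (G.depth s)).2 ∈ G.act s := act_mem_of_state_eq hp
    have hb : (p.1 (G.depth s)).2 ≠ a := by
      intro hb
      have hnext := (p.2.2 (G.depth s)).2
      rw [hp, hb] at hnext
      refine hnot (Set.mem_iUnion.mpr ⟨⟨_, hnext⟩, mem_through_iff.mpr ?_⟩)
      rw [← eq_depth_of_state_eq rfl]
    exact Set.mem_biUnion (Finset.mem_erase.mpr ⟨hb, hact⟩) (Prod.ext hp rfl)
  refine ae_eq_set.mpr ⟨measure_mono_null hdiff ?_, by
    rw [Set.sdiff_eq_empty.mpr hsub, measure_empty]⟩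
  exact (measure_biUnion_null_iff (Finset.countable_toSet _)).mpr fun b hb =>
    measure_setOf_apply_depth_eq_of_ne hμ (Finset.mem_of_mem_erase hb) σ
      (Finset.ne_of_mem_erase hb)

theorem hasSum_setIntegral_through {σ : G.Profile} {g : G.Play → ℝ} (hg : Integrable g (μ σ))
    (s : S) :
    HasSum (fun z : (G.q s (G.playFun σ s)).support => ∫ p in G.through z, g p ∂μ σ)
      (∫ p in G.through s, g p ∂μ σ) := by
  have := (G.q s (G.playFun σ s)).support_countable.to_subtype
  have hdisj : Pairwise (Function.onFun Disjoint
      fun z : (G.q s (G.playFun σ s)).support => G.through z) := by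
    intro z z' hne
    refine Set.disjoint_left.mpr fun p hp hp' => hne (Subtype.ext ?_)
    rw [mem_through_iff, depth_of_step ⟨_, playFun_mem σ s, z.2⟩] at hp
    rw [mem_through_iff, depth_of_step ⟨_, playFun_mem σ s, z'.2⟩] at hp'
    exact hp.symm.trans hp'
  rw [setIntegral_congr_set (through_ae_eq_iUnion_through hμ σ s)]
  exact hasSum_integral_iUnion (fun z => measurableSet_through (G := G) z.1) hdisj
    hg.integrableOn

omit hμ in
include hE in
theorem integral_through_followHistory (σ : G.Profile) (s : S) :
    ∫ p in G.through s, u i p ∂μ (G.followHistory σ s) =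
      E σ s i * (μ (G.followHistory σ s) (G.through s)).toReal :=
  hE _ _ _ _ fun _ hz => playFun_followHistory_of_reach σ hz

include hE

theorem E_congr {σ σ' : G.Profile} {s : S}
    (h : ∀ z, ReflTransGen G.step s z → G.playFun σ z = G.playFun σ' z) :
    E σ s i = E σ' s i := by
  have hσ' := hE σ' (G.followHistory σ s) s i fun z hz =>
    (playFun_followHistory_of_reach σ hz).trans (h z hz)
  exact mul_right_cancel₀ (toReal_measure_through_followHistory_pos hμ σ s).ne'
    ((integral_through_followHistory hE σ s).symm.trans hσ')

theorem abs_E_le {C : ℝ} (hb : ∀ p, |u i p| ≤ C) (σ : G.Profile) (s : S) :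
    |E σ s i| ≤ C := by
  have hc := toReal_measure_through_followHistory_pos hμ σ s
  have := hμ.1 (G.followHistory σ s)
  refine le_of_mul_le_mul_right ?_ hc
  have h := norm_setIntegral_le_of_norm_le_const
    (measure_lt_top (μ (G.followHistory σ s)) (G.through s))
    fun p _ => (Real.norm_eq_abs (u i p)).trans_le (hb p)
  rwa [integral_through_followHistory hE, Real.norm_eq_abs, abs_mul,
    abs_of_pos hc, measureReal_def] at h

theorem E_le_of_forall_le (hm : Measurable (u i)) {C M : ℝ} (hb : ∀ p, |u i p| ≤ C)
    (σ : G.Profile) {s : S} (h : ∀ p ∈ G.through s, u i p ≤ M) : E σ s i ≤ M := by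
  have hc := toReal_measure_through_followHistory_pos hμ σ s
  have := hμ.1 (G.followHistory σ s)
  refine le_of_mul_le_mul_right ?_ hc
  have hle := setIntegral_mono_on (integrable_of_abs_le hμ hm hb _).integrableOn
    (integrableOn_const (measure_ne_top (μ (G.followHistory σ s)) _))
    (measurableSet_through s) h
  rwa [integral_through_followHistory hE, setIntegral_const, smul_eq_mul, measureReal_def,
    mul_comm _ M] at hle

theorem E_eq_tsum (hm : Measurable (u i)) {C : ℝ} (hb : ∀ p, |u i p| ≤ C) (σ : G.Profile)
    (s : S) : E σ s i = ∑' z, (G.q s (G.playFun σ s) z).toReal * E σ z i := by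
  set τ := G.followHistory σ s
  set c := (μ τ (G.through s)).toReal
  have ha : G.playFun τ s = G.playFun σ s := playFun_followHistory_of_reach σ .refl
  have hsum := hasSum_setIntegral_through hμ (integrable_of_abs_le hμ hm hb τ) s
  rw [integral_through_followHistory hE] at hsum
  have hterm : ∀ z : (G.q s (G.playFun τ s)).support, ∫ p in G.through z, u i p ∂μ τ =
      c * ((G.q s (G.playFun τ s) z).toReal * E σ z i) := by
    rintro ⟨z, hz⟩
    have hsz : ReflTransGen G.step s z := .single ⟨_, playFun_mem τ s, hz⟩
    rw [hE σ τ z i fun x hx => playFun_followHistory_of_reach σ (hsz.trans hx),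
      measure_through_child hμ τ hz, ENNReal.toReal_mul]
    ring
  simp_rw [hterm] at hsum
  have hsum' := ((G.q s (G.playFun τ s)).hasSum_support_toReal_mul
    (abs_E_le hμ hE hb σ)).mul_left c
  rw [← ha]
  exact mul_left_cancel₀ (toReal_measure_through_followHistory_pos hμ σ s).ne'
    ((mul_comm _ _).trans (hsum.unique hsum'))

end SubgamePayoff

noncomputable def bestReply (G : PGame N S A) (E : G.Profile → S → N → ℝ) (i : N)
    (τo : G.Profile) (s : S) : ℝ :=
  ⨆ τi : G.Strat i, E (G.comb i τi τo) s i

noncomputable def upperVal (G : PGame N S A) (E : G.Profile → S → N → ℝ) (s : S) (i : N) : ℝ :=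
  ⨅ τo : G.Profile, G.bestReply E i τo s

section Values

variable {μ : G.Profile → Measure G.Play} {u : N → G.Play → ℝ} {E : G.Profile → S → N → ℝ}
  (hμ : G.IsInducedMeasure μ) (hE : G.IsSubgamePayoff μ u E) {i : N} {C : ℝ}
  (hb : ∀ p, |u i p| ≤ C)

include hμ hE hb

theorem E_comb_le_bestReply (τi : G.Strat i) (τo : G.Profile) (s : S) :
    E (G.comb i τi τo) s i ≤ G.bestReply E i τo s :=
  le_ciSup (bddAbove_range_of_abs_le fun _ => abs_E_le hμ hE hb _ s) τi

theorem abs_bestReply_le (τo : G.Profile) (s : S) : |G.bestReply E i τo s| ≤ C :=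
  abs_ciSup_le fun _ => abs_E_le hμ hE hb _ s

theorem upperVal_le_bestReply (τo : G.Profile) (s : S) :
    G.upperVal E s i ≤ G.bestReply E i τo s :=
  ciInf_le (bddBelow_range_of_abs_le fun _ => abs_bestReply_le hμ hE hb _ s) τo

theorem abs_upperVal_le (s : S) : |G.upperVal E s i| ≤ C :=
  abs_ciInf_le fun _ => abs_bestReply_le hμ hE hb _ s

theorem val_le_upperVal (s : S) : G.val E s i ≤ G.upperVal E s i :=
  ciSup_le fun τi => le_ciInf fun τo =>
    (ciInf_le (bddBelow_range_of_abs_le fun _ => abs_E_le hμ hE hb _ s) τo).trans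
      (E_comb_le_bestReply hμ hE hb τi τo s)

theorem exists_tsum_bestReply_le {s : S} {a : A} (ha : a ∈ G.act s) {ε : ℝ} (hε : 0 < ε) :
    ∃ τo : G.Profile, G.playFun τo s = a ∧ ∀ b ∈ G.act s,
      ∑' z, (G.q s b z).toReal * G.bestReply E i τo z ≤
        ∑' z, (G.q s b z).toReal * G.upperVal E z i + ε := by
  choose F hF using fun z => exists_lt_of_ciInf_lt (lt_add_of_pos_right (G.upperVal E z i) hε)
  refine ⟨G.graft s a ha F, graft_apply_self ha F _, fun b hbs => ?_⟩
  refine PMF.tsum_toReal_mul_le_tsum_toReal_mul_add _ (abs_bestReply_le hμ hE hb _)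
    (abs_upperVal_le hμ hE hb) fun z hz => ?_
  refine le_of_eq_of_le (iSup_congr fun τi => E_congr hμ hE fun x hx => ?_) (hF z).le
  by_cases hc : G.ctrl x = i
  · rw [playFun_comb_of_ctrl_eq _ _ hc, playFun_comb_of_ctrl_eq _ _ hc]
  · rw [playFun_comb_of_ctrl_ne _ _ hc, playFun_comb_of_ctrl_ne _ _ hc]
    exact graft_apply_of_reach ha F ⟨b, hbs, hz⟩ hx _

variable (hm : Measurable (u i))
include hm

theorem E_comb_le_tsum_bestReply (τi : G.Strat i) (τo : G.Profile) (s : S) :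
    E (G.comb i τi τo) s i ≤
      ∑' z, (G.q s (G.playFun (G.comb i τi τo) s) z).toReal * G.bestReply E i τo z := by
  rw [E_eq_tsum hμ hE hm hb]
  exact PMF.tsum_toReal_mul_le_tsum_toReal_mul _ (abs_E_le hμ hE hb _)
    (abs_bestReply_le hμ hE hb τo) fun z _ => E_comb_le_bestReply hμ hE hb τi τo z

theorem tsum_bestReply_le_bestReply {τo : G.Profile} {s : S} {a : A} (ha : a ∈ G.act s)
    (h : G.ctrl s = i ∨ a = G.playFun τo s) :
    ∑' z, (G.q s a z).toReal * G.bestReply E i τo z ≤ G.bestReply E i τo s := by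
  refine le_of_forall_pos_le_add fun ε hε => ?_
  choose F hF using fun z => exists_lt_of_lt_ciSup (sub_lt_self (G.bestReply E i τo z) hε)
  set τi := G.graft s a ha (fun z => G.comb i (F z) τo) i
  have hplay : G.playFun (G.comb i τi τo) s = a := by
    by_cases hc : G.ctrl s = i
    · rw [playFun_comb_of_ctrl_eq _ _ hc, graft_apply_self]
    · rw [playFun_comb_of_ctrl_ne _ _ hc]
      exact (h.resolve_left hc).symm
  have hchild : ∀ z ∈ (G.q s a).support,
      G.bestReply E i τo z ≤ E (G.comb i τi τo) z i + ε := by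
    intro z hz
    have hsame : E (G.comb i (F z) τo) z i = E (G.comb i τi τo) z i :=
      E_congr hμ hE fun x hx => by
        by_cases hc : G.ctrl x = i
        · rw [playFun_comb_of_ctrl_eq _ _ hc, playFun_comb_of_ctrl_eq _ _ hc,
            graft_apply_of_reach ha _ ⟨a, ha, hz⟩ hx, comb_apply_self]
        · rw [playFun_comb_of_ctrl_ne _ _ hc, playFun_comb_of_ctrl_ne _ _ hc]
    linarith [hF z]
  calc ∑' z, (G.q s a z).toReal * G.bestReply E i τo z
      ≤ ∑' z, (G.q s a z).toReal * E (G.comb i τi τo) z i + ε :=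
        PMF.tsum_toReal_mul_le_tsum_toReal_mul_add _ (abs_bestReply_le hμ hE hb τo)
          (abs_E_le hμ hE hb _) hchild
    _ = E (G.comb i τi τo) s i + ε := by rw [E_eq_tsum hμ hE hm hb _ s, hplay]
    _ ≤ G.bestReply E i τo s + ε := by grw [E_comb_le_bestReply hμ hE hb τi τo s]

theorem bestReply_eq_sup' (τo : G.Profile) {s : S} (h : G.ctrl s = i) :
    G.bestReply E i τo s = (G.act s).sup' (G.act_nonempty s)
      fun a => ∑' z, (G.q s a z).toReal * G.bestReply E i τo z := by
  refine le_antisymm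
    (ciSup_le fun τi => (E_comb_le_tsum_bestReply hμ hE hb hm τi τo s).trans ?_)
    (Finset.sup'_le _ _ fun a ha => tsum_bestReply_le_bestReply hμ hE hb hm ha (.inl h))
  rw [playFun_comb_of_ctrl_eq _ _ h]
  exact Finset.le_sup' (fun a => ∑' z, (G.q s a z).toReal * G.bestReply E i τo z) (τi.2 s h)

theorem bestReply_eq_tsum (τo : G.Profile) {s : S} (h : G.ctrl s ≠ i) :
    G.bestReply E i τo s = ∑' z, (G.q s (G.playFun τo s) z).toReal * G.bestReply E i τo z :=
  le_antisymm
    (ciSup_le fun τi => (E_comb_le_tsum_bestReply hμ hE hb hm τi τo s).trans_eq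
      (by rw [playFun_comb_of_ctrl_ne _ _ h]))
    (tsum_bestReply_le_bestReply hμ hE hb hm (playFun_mem τo s) (.inr rfl))

theorem upperVal_eq_sup' {s : S} (h : G.ctrl s = i) :
    G.upperVal E s i = (G.act s).sup' (G.act_nonempty s)
      fun a => ∑' z, (G.q s a z).toReal * G.upperVal E z i := by
  refine le_antisymm (le_of_forall_pos_le_add fun ε hε => ?_) (le_ciInf fun τo => ?_)
  · obtain ⟨τo, -, hτo⟩ :=
      exists_tsum_bestReply_le hμ hE hb (G.act_nonempty s).choose_spec hε
    calc G.upperVal E s i ≤ G.bestReply E i τo s := upperVal_le_bestReply hμ hE hb τo s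
      _ = _ := bestReply_eq_sup' hμ hE hb hm τo h
      _ ≤ _ := Finset.sup'_le _ _ fun a ha => (hτo a ha).trans (add_le_add_left
        (Finset.le_sup' (fun a => ∑' z, (G.q s a z).toReal * G.upperVal E z i) ha) ε)
  · rw [bestReply_eq_sup' hμ hE hb hm τo h]
    exact Finset.sup'_mono_fun fun a _ => PMF.tsum_toReal_mul_le_tsum_toReal_mul _
      (abs_upperVal_le hμ hE hb) (abs_bestReply_le hμ hE hb τo)
      fun z _ => upperVal_le_bestReply hμ hE hb τo z

theorem upperVal_eq_inf' {s : S} (h : G.ctrl s ≠ i) :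
    G.upperVal E s i = (G.act s).inf' (G.act_nonempty s)
      fun a => ∑' z, (G.q s a z).toReal * G.upperVal E z i := by
  refine le_antisymm (Finset.le_inf' _ _ fun a ha => le_of_forall_pos_le_add fun ε hε => ?_)
    (le_ciInf fun τo => ?_)
  · obtain ⟨τo, hτa, hτo⟩ := exists_tsum_bestReply_le hμ hE hb ha hε
    calc G.upperVal E s i ≤ G.bestReply E i τo s := upperVal_le_bestReply hμ hE hb τo s
      _ = _ := by rw [bestReply_eq_tsum hμ hE hb hm τo h, hτa]
      _ ≤ _ := hτo a ha
  · rw [bestReply_eq_tsum hμ hE hb hm τo h]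
    exact (Finset.inf'_le _ (playFun_mem τo s)).trans
      (PMF.tsum_toReal_mul_le_tsum_toReal_mul _ (abs_upperVal_le hμ hE hb)
        (abs_bestReply_le hμ hE hb τo) fun z _ => upperVal_le_bestReply hμ hE hb τo z)

end Values

section Continuity

noncomputable def supThrough (G : PGame N S A) (f : G.Play → ℝ) (s : S) : ℝ :=
  ⨆ p : G.through s, f p

variable {f : G.Play → ℝ} {C : ℝ}

theorem le_supThrough (hb : ∀ p, |f p| ≤ C) {p : G.Play} {s : S} (hp : p ∈ G.through s) :
    f p ≤ G.supThrough f s :=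
  le_ciSup (f := fun p : G.through s => f p) (bddAbove_range_of_abs_le fun p => hb p) ⟨p, hp⟩

theorem abs_supThrough_le (hb : ∀ p, |f p| ≤ C) (s : S) : |G.supThrough f s| ≤ C :=
  abs_ciSup_le fun p => hb p

theorem tendsto_supThrough (hf : Continuous f) (hb : ∀ p, |f p| ≤ C) (p : G.Play) :
    Tendsto (fun k => G.supThrough f (p.1 k).1) atTop (𝓝 (f p)) := by
  refine tendsto_order.2 ⟨fun a ha => Eventually.of_forall fun k =>
    ha.trans_le (le_supThrough hb ⟨k, rfl⟩), fun a ha => ?_⟩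
  obtain ⟨b, hpb, hba⟩ := exists_between ha
  obtain ⟨M, hM⟩ :=
    exists_cylSet_subset_of_mem_nhds (hf.continuousAt.preimage_mem_nhds (Iio_mem_nhds hpb))
  refine eventually_atTop.2 ⟨M, fun k hk => (ciSup_le fun q => ?_).trans_lt hba⟩
  exact (hM fun m hm => through_subset_cylSet p k q.2 m (hm.trans_le hk)).le

theorem tendsto_integral_supThrough (hf : Continuous f) (hb : ∀ p, |f p| ≤ C)
    (ν : Measure G.Play) [IsFiniteMeasure ν] :
    Tendsto (fun k => ∫ p, G.supThrough f (p.1 k).1 ∂ν) atTop (𝓝 (∫ p, f p ∂ν)) :=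
  tendsto_integral_of_dominated_convergence (fun _ => C)
    (fun k => (measurable_comp_apply k fun c => G.supThrough f c.1).aestronglyMeasurable)
    (integrable_const C)
    (fun _ => ae_of_all _ fun _ => (Real.norm_eq_abs _).trans_le (abs_supThrough_le hb _))
    (ae_of_all _ (tendsto_supThrough hf hb))

end Continuity

section Submartingale

variable {μ : G.Profile → Measure G.Play} (hμ : G.IsInducedMeasure μ)
  {σ : G.Profile} {s : S} {w : S → ℝ} {C : ℝ}

include hμ

theorem mul_measure_through_le_setIntegral (hw : ∀ x, |w x| ≤ C)
    (hsub : ∀ x, ReflTransGen G.step s x →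
      w x ≤ ∑' z, (G.q x (G.playFun σ x) z).toReal * w z) (n : ℕ) :
    ∀ x, ReflTransGen G.step s x →
      w x * (μ σ (G.through x)).toReal ≤
        ∫ p in G.through x, w (p.1 (G.depth x + n)).1 ∂μ σ := by
  induction n with
  | zero =>
    intro x _
    rw [setIntegral_congr_fun (measurableSet_through x) fun p hp => by
      rw [add_zero, mem_through_iff.mp hp], setIntegral_const, smul_eq_mul, measureReal_def,
      mul_comm]
  | succ n ih =>
    intro x hx
    set c := (μ σ (G.through x)).toReal
    have hint := hasSum_setIntegral_through hμ
      (integrable_of_abs_le hμ (measurable_comp_apply (G.depth x + (n + 1)) fun c => w c.1)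
        (fun p => hw _) σ) x
    have hw_sum := ((G.q x (G.playFun σ x)).hasSum_support_toReal_mul hw).mul_left c
    have hchild : ∀ z : (G.q x (G.playFun σ x)).support,
        c * ((G.q x (G.playFun σ x) z).toReal * w z) ≤
          ∫ p in G.through z, w (p.1 (G.depth x + (n + 1))).1 ∂μ σ := by
      rintro ⟨z, hz⟩
      have hxz : G.step x z := ⟨_, playFun_mem σ x, hz⟩
      have h := ih z (hx.tail hxz)
      rw [measure_through_child hμ σ hz, ENNReal.toReal_mul, depth_of_step hxz,
        add_right_comm, add_assoc] at h
      exact le_of_eq_of_le (by ring) h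
    calc w x * c ≤ c * ∑' z, (G.q x (G.playFun σ x) z).toReal * w z := by
          rw [mul_comm]
          exact mul_le_mul_of_nonneg_left (hsub x hx) ENNReal.toReal_nonneg
      _ ≤ _ := hasSum_le hchild hw_sum hint

end Submartingale

section ValueExistence

variable {μ : G.Profile → Measure G.Play} {u : N → G.Play → ℝ} {E : G.Profile → S → N → ℝ}
  (hμ : G.IsInducedMeasure μ) (hE : G.IsSubgamePayoff μ u E) {i : N} {C : ℝ}
  (hb : ∀ p, |u i p| ≤ C)

include hμ hE hb

theorem le_E_of_submartingale (hf : Continuous (u i)) {σ : G.Profile} {s : S} {w : S → ℝ}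
    {C' : ℝ} (hw : ∀ x, |w x| ≤ C')
    (hsub : ∀ x, ReflTransGen G.step s x → w x ≤ ∑' z, (G.q x (G.playFun σ x) z).toReal * w z)
    (hle : ∀ x, w x ≤ G.supThrough (u i) x) : w s ≤ E σ s i := by
  set τ := G.followHistory σ s
  have := hμ.1 τ
  have hsubτ : ∀ x, ReflTransGen G.step s x →
      w x ≤ ∑' z, (G.q x (G.playFun τ x) z).toReal * w z := fun x hx => by
    rw [playFun_followHistory_of_reach σ hx]
    exact hsub x hx
  have hlim := (tendsto_integral_supThrough hf hb ((μ τ).restrict (G.through s))).comp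
    (tendsto_atTop_mono (fun n => Nat.le_add_left n (G.depth s)) tendsto_id)
  refine le_of_mul_le_mul_right ?_ (toReal_measure_through_followHistory_pos hμ σ s)
  rw [← integral_through_followHistory hE]
  refine ge_of_tendsto hlim (Eventually.of_forall fun n => ?_)
  refine (mul_measure_through_le_setIntegral hμ hw hsubτ n s .refl).trans
    (setIntegral_mono_on ?_ ?_ (measurableSet_through s) fun p _ => hle _)
  · exact (integrable_of_abs_le hμ (measurable_comp_apply _ fun c => w c.1)
      (fun _ => hw _) τ).integrableOn
  · exact (integrable_of_abs_le hμ (measurable_comp_apply _ fun c => G.supThrough (u i) c.1)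
      (fun _ => abs_supThrough_le hb _) τ).integrableOn

noncomputable def greedy (G : PGame N S A) (E : G.Profile → S → N → ℝ) (i : N) : G.Strat i :=
  ⟨fun x => (Finset.exists_mem_eq_sup' (G.act_nonempty x)
      fun a => ∑' z, (G.q x a z).toReal * G.upperVal E z i).choose,
    fun x _ => (Finset.exists_mem_eq_sup' (G.act_nonempty x) _).choose_spec.1⟩

theorem upperVal_le_tsum_greedy (hm : Measurable (u i)) (τo : G.Profile) (x : S) :
    G.upperVal E x i ≤
      ∑' z, (G.q x (G.playFun (G.comb i (G.greedy E i) τo) x) z).toReal * G.upperVal E z i := by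
  by_cases h : G.ctrl x = i
  · rw [playFun_comb_of_ctrl_eq _ _ h, upperVal_eq_sup' hμ hE hb hm h]
    exact (Finset.exists_mem_eq_sup' (G.act_nonempty x) _).choose_spec.2.le
  · rw [playFun_comb_of_ctrl_ne _ _ h, upperVal_eq_inf' hμ hE hb hm h]
    exact Finset.inf'_le _ (playFun_mem τo x)

theorem upperVal_le_supThrough (hm : Measurable (u i)) (s : S) :
    G.upperVal E s i ≤ G.supThrough (u i) s :=
  (upperVal_le_bestReply hμ hE hb (Classical.arbitrary _) s).trans
    (ciSup_le fun _ => E_le_of_forall_le hμ hE hm hb _ fun _ hp => le_supThrough hb hp)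

theorem upperVal_le_val (hf : Continuous (u i)) (s : S) : G.upperVal E s i ≤ G.val E s i :=
  (le_ciInf fun τo => le_E_of_submartingale hμ hE hb hf (abs_upperVal_le hμ hE hb)
      (fun x _ => upperVal_le_tsum_greedy hμ hE hb hf.measurable τo x)
      (upperVal_le_supThrough hμ hE hb hf.measurable)).trans
    (le_ciSup (bddAbove_range_of_abs_le fun _ => abs_ciInf_le fun _ => abs_E_le hμ hE hb _ s)
      (G.greedy E i))

theorem val_eq_upperVal (hf : Continuous (u i)) (s : S) : G.val E s i = G.upperVal E s i :=
  (val_le_upperVal hμ hE hb s).antisymm (upperVal_le_val hμ hE hb hf s)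

end ValueExistence

end PGame

theorem subgame_value_equations_general
    {N S A : Type*}
    (G : PGame N S A) (u : N → G.Play → ℝ)
    (hu_bdd : ∀ i : N, ∃ C : ℝ, ∀ p : G.Play, |u i p| ≤ C)
    (hu_cont : ∀ i : N, Continuous (u i))
    (μ : G.Profile → MeasureTheory.Measure G.Play)
    (hμ : G.IsInducedMeasure μ)
    (E : G.Profile → S → N → ℝ)
    (hE : G.IsSubgamePayoff μ u E) :
    (∀ (i : N) (s : S),
        (⨆ τi : G.Strat i, ⨅ τo : G.Profile, E (G.comb i τi τo) s i) =
          (⨅ τo : G.Profile, ⨆ τi : G.Strat i, E (G.comb i τi τo) s i)) ∧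
    (∀ s : S,
        G.val E s (G.ctrl s) =
          (G.act s).sup' (G.act_nonempty s) (fun a => G.valQ E s a (G.ctrl s))) ∧
    (∀ (s : S) (j : N), j ≠ G.ctrl s →
        G.val E s j = (G.act s).inf' (G.act_nonempty s) (fun a => G.valQ E s a j)) := by
  choose C hC using hu_bdd
  have hval (i : N) (s : S) : G.val E s i = G.upperVal E s i :=
    PGame.val_eq_upperVal hμ hE (hC i) (hu_cont i) s
  refine ⟨hval, fun s => ?_, fun s j hj => ?_⟩
  · simp only [PGame.valQ, hval]
    exact PGame.upperVal_eq_sup' hμ hE (hC _) (hu_cont _).measurable rfl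
  · simp only [PGame.valQ, hval]
    exact PGame.upperVal_eq_inf' hμ hE (hC j) (hu_cont j).measurable hj.symm

/-- **The value equations** (equations (1) and (2)): in a multi-player
perfect-information game with probabilistic transitions, countable state space,
nonempty finite action sets, and bounded continuous payoff functions, the values
`v_i(s)` of the zero-sum subgames `G_i(s)` exist (i.e. `sup inf = inf sup`), the
controlling player's value satisfies `v_{i(s)}(s) = max_{a ∈ A(s)} v_{i(s)}(s,a)`,
and every other player's value satisfies `v_j(s) = min_{a ∈ A(s)} v_j(s,a)`. -/
theorem subgame_value_equations
    {N S A : Type*} [Finite N] [Countable S]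
    (hN : 2 ≤ Nat.card N)
    (G : PGame N S A) (u : N → G.Play → ℝ)
    (hu_bdd : ∀ i : N, ∃ C : ℝ, ∀ p : G.Play, |u i p| ≤ C)
    (hu_cont : ∀ i : N, Continuous (u i))
    (μ : G.Profile → MeasureTheory.Measure G.Play)
    (hμ : G.IsInducedMeasure μ)
    (E : G.Profile → S → N → ℝ)
    (hE : G.IsSubgamePayoff μ u E) :
    (∀ (i : N) (s : S),
        (⨆ τi : G.Strat i, ⨅ τo : G.Profile, E (G.comb i τi τo) s i) =
          (⨅ τo : G.Profile, ⨆ τi : G.Strat i, E (G.comb i τi τo) s i)) ∧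
    (∀ s : S,
        G.val E s (G.ctrl s) =
          (G.act s).sup' (G.act_nonempty s) (fun a => G.valQ E s a (G.ctrl s))) ∧
    (∀ (s : S) (j : N), j ≠ G.ctrl s →
        G.val E s j = (G.act s).inf' (G.act_nonempty s) (fun a => G.valQ E s a j)) :=
  subgame_value_equations_general G u hu_bdd hu_cont μ hμ E hE
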